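/- Let M ≥ 1, λ_SR > 0, λ_RE > 0, η > 0, Ψ > 0, γ_th > 0, and let A > 0 and C > 0 be constants. Let X be the maximum of M i.i.d. exponential(λ_SR) random variables and let Z be exponential(λ_RE), independent of X. Then P( η Ψ X Z / (η A Z + C) < γ_th ) = 1 + Σ_{b=1}^{M} (−1)^b C(M,b) exp(−b λ_SR γ_th A/Ψ) · λ_RE ∫₀^∞ exp( −b λ_SR γ_th C/(η Ψ z) − λ_RE z ) dz. -/

import Mathlib

/-!
Conditionally on `Z = z > 0`, the event `ηΨXZ/(ηAZ + C) < γ_th` is `X < t(z)` with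
`t(z) = γ_th A/Ψ + γ_th C/(ηΨz)`, and the maximum of `M` independent exponential(λ_SR) variables
lies below `t` with probability `(1 - e^{-λ_SR t})^M`. Integrating this against the density of `Z`
(Fubini, using the independence of `max X` and `Z`) and expanding the power binomially gives the
sum; the `b = 0` term integrates to `1`.
-/

open MeasureTheory ProbabilityTheory Real Finset

namespace ProbabilityTheory

lemma expMeasure_eq_withDensity (r : ℝ) :
    expMeasure r = volume.withDensity (exponentialPDF r) := rfl

lemma expMeasure_Iic {r : ℝ} (hr : 0 < r) (t : ℝ) :
    expMeasure r (Set.Iic t) = ENNReal.ofReal (if 0 ≤ t then 1 - exp (-(r * t)) else 0) := by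
  rw [expMeasure_eq_withDensity, withDensity_apply _ measurableSet_Iic,
    lintegral_exponentialPDF_eq_antiDeriv hr t]

lemma expMeasure_Iio {r : ℝ} (hr : 0 < r) {t : ℝ} (ht : 0 ≤ t) :
    expMeasure r (Set.Iio t) = ENNReal.ofReal (1 - exp (-(r * t))) := by
  rw [expMeasure_eq_withDensity, withDensity_apply _ measurableSet_Iio,
    restrict_Iio_eq_restrict_Iic, ← withDensity_apply _ measurableSet_Iic,
    ← expMeasure_eq_withDensity, expMeasure_Iic hr, if_pos ht]

lemma ae_pos_expMeasure {r : ℝ} (hr : 0 < r) : ∀ᵐ z ∂expMeasure r, 0 < z := by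
  have h0 : expMeasure r (Set.Iic 0) = 0 := by simp [expMeasure_Iic hr]
  rw [ae_iff]
  simp only [not_lt]
  exact h0

lemma integral_expMeasure {r : ℝ} (hr : 0 < r) (g : ℝ → ℝ) :
    ∫ z, g z ∂expMeasure r = ∫ z in Set.Ioi 0, r * exp (-(r * z)) * g z := by
  rw [expMeasure_eq_withDensity, integral_withDensity_eq_integral_toReal_smul (f := exponentialPDF r)
    (measurable_exponentialPDFReal r).ennreal_ofReal (ae_of_all _ fun _ => ENNReal.ofReal_lt_top),
    ← integral_Ici_eq_integral_Ioi, ← setIntegral_eq_integral_of_forall_compl_eq_zero]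
  · refine setIntegral_congr_fun measurableSet_Ici fun z (hz : 0 ≤ z) => ?_
    simp [exponentialPDF_of_nonneg hz, hr.le, (exp_pos _).le]
  · intro z hz
    simp [exponentialPDF_of_neg (not_le.mp hz)]

variable {Ω : Type*} [MeasurableSpace Ω] {P : Measure Ω}

lemma iIndepFun.measure_iSup_lt {ι : Type*} [Fintype ι] [Nonempty ι] {X : ι → Ω → ℝ}
    (hX : iIndepFun X P) (t : ℝ) :
    P ((fun ω => ⨆ i, X i ω) ⁻¹' Set.Iio t) = ∏ i, P (X i ⁻¹' Set.Iio t) := by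
  have hset : (fun ω => ⨆ i, X i ω) ⁻¹' Set.Iio t = ⋂ i, X i ⁻¹' Set.Iio t := by
    ext ω
    simp only [Set.mem_iInter, Set.mem_preimage, Set.mem_Iio]
    refine ⟨fun h i => (le_ciSup (Finite.bddAbove_range _) i).trans_lt h, fun h => ?_⟩
    obtain ⟨i, hi⟩ := exists_eq_ciSup_of_finite (f := fun i => X i ω)
    exact hi ▸ h i
  rw [hset, hX.meas_iInter fun i => ⟨Set.Iio t, measurableSet_Iio, rfl⟩]

lemma iIndepFun.indepFun_iSup_sumElim {ι : Type*} [Fintype ι] {X : ι → Ω → ℝ} {Z : Ω → ℝ}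
    (h : iIndepFun (Sum.elim X fun _ : Unit => Z) P) (hX : ∀ i, Measurable (X i))
    (hZ : Measurable Z) :
    IndepFun (fun ω => ⨆ i, X i ω) Z P := by
  have hmeas : ∀ j, Measurable (Sum.elim X (fun _ : Unit => Z) j) := Sum.forall.2 ⟨hX, fun _ => hZ⟩
  let S : Finset (ι ⊕ Unit) := univ.map .inl
  let T : Finset (ι ⊕ Unit) := univ.map .inr
  have hST : Disjoint S T := by simp [S, T, Finset.disjoint_left]
  have hinl (i : ι) : .inl i ∈ S := by simp [S]
  have hinr : .inr () ∈ T := by simp [T]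
  exact (h.indepFun_finset S T hST hmeas).comp
    (φ := fun v : S → ℝ => ⨆ i, v ⟨.inl i, hinl i⟩) (ψ := fun v : T → ℝ => v ⟨.inr (), hinr⟩)
    (Measurable.iSup fun i => measurable_pi_apply _) (measurable_pi_apply _)

lemma IndepFun.measure_preimage_eq_lintegral {α β : Type*} [MeasurableSpace α] [MeasurableSpace β]
    [IsFiniteMeasure P] {Y : Ω → α} {Z : Ω → β} (h : IndepFun Y Z P) (hY : Measurable Y)
    (hZ : Measurable Z) {S : Set (α × β)} (hS : MeasurableSet S) :
    P ((fun ω => (Y ω, Z ω)) ⁻¹' S) = ∫⁻ z, P.map Y ((fun y => (y, z)) ⁻¹' S) ∂P.map Z := by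
  rw [← Measure.map_apply (hY.prodMk hZ) hS,
    (indepFun_iff_map_prod_eq_prod_map_map hY.aemeasurable hZ.aemeasurable).1 h,
    Measure.prod_apply_symm hS]

lemma iIndepFun.measure_iSup_lt_of_map_eq_expMeasure {ι : Type*} [Fintype ι] [Nonempty ι]
    {X : ι → Ω → ℝ} {r t : ℝ} (hX : iIndepFun X P) (hmeas : ∀ i, Measurable (X i))
    (hlaw : ∀ i, P.map (X i) = expMeasure r) (hr : 0 < r) (ht : 0 ≤ t) :
    P ((fun ω => ⨆ i, X i ω) ⁻¹' Set.Iio t) =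
      ENNReal.ofReal ((1 - exp (-(r * t))) ^ Fintype.card ι) := by
  have hcdf : 0 ≤ 1 - exp (-(r * t)) := sub_nonneg.2 (exp_le_one_iff.2 (by nlinarith))
  rw [hX.measure_iSup_lt, ENNReal.ofReal_pow hcdf, ← card_univ, ← prod_const]
  refine prod_congr rfl fun i _ => ?_
  rw [← Measure.map_apply (hmeas i) measurableSet_Iio, hlaw i, expMeasure_Iio hr ht]

end ProbabilityTheory

lemma one_sub_exp_neg_pow (u : ℝ) (M : ℕ) :
    (1 - exp (-u)) ^ M = ∑ b ∈ range (M + 1), (-1) ^ b * (M.choose b : ℝ) * exp (-(b * u)) := by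
  rw [sub_eq_neg_add, add_pow]
  refine sum_congr rfl fun b _ => ?_
  rw [one_pow, mul_one, neg_pow, ← exp_nat_mul, mul_neg]
  ring

lemma integrableOn_exp_neg_div_sub_mul_Ioi {q r : ℝ} (hq : 0 ≤ q) (hr : 0 < r) :
    IntegrableOn (fun z => exp (-(q / z) - r * z)) (Set.Ioi 0) := by
  refine (exp_neg_integrableOn_Ioi 0 hr).mono' (by fun_prop) ?_
  filter_upwards [self_mem_ae_restrict measurableSet_Ioi] with z (hz : 0 < z)
  rw [norm_of_nonneg (exp_pos _).le, neg_mul]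
  gcongr
  linarith [div_nonneg hq hz.le]

lemma mul_integral_exp_neg_mul_Ioi {r : ℝ} (hr : 0 < r) :
    r * ∫ z in Set.Ioi 0, exp (-(r * z)) = 1 := by
  simp_rw [← neg_mul]
  rw [integral_exp_mul_Ioi (neg_lt_zero.2 hr), mul_zero, exp_zero]
  field_simp

lemma integral_exp_mul_one_sub_exp_pow {r p q : ℝ} (hr : 0 < r) (hq : 0 ≤ q) (M : ℕ) :
    ∫ z in Set.Ioi 0, r * exp (-(r * z)) * (1 - exp (-(p + q / z))) ^ M =
      1 + ∑ b ∈ Icc 1 M, (-1) ^ b * (M.choose b : ℝ) * exp (-(b * p)) *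
        (r * ∫ z in Set.Ioi 0, exp (-(b * q / z) - r * z)) := by
  have hexpand (z : ℝ) : r * exp (-(r * z)) * (1 - exp (-(p + q / z))) ^ M =
      ∑ b ∈ range (M + 1), (-1) ^ b * (M.choose b : ℝ) * exp (-(b * p)) * r *
        exp (-(b * q / z) - r * z) := by
    rw [one_sub_exp_neg_pow, mul_sum]
    refine sum_congr rfl fun b _ => ?_
    rw [sub_eq_add_neg, exp_add, show -(b * (p + q / z)) = -(b * p) + -(b * q / z) by ring,
      exp_add]
    ring
  have hrange : range (M + 1) = insert 0 (Icc 1 M) := by ext; simp; omega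
  simp_rw [hexpand]
  rw [integral_finsetSum _ fun b _ =>
      (integrableOn_exp_neg_div_sub_mul_Ioi (by positivity) hr).const_mul _,
    hrange, sum_insert (by simp)]
  simp_rw [integral_const_mul, mul_assoc]
  simp [mul_integral_exp_neg_mul_Ioi hr]

lemma setOf_div_lt_eq_Iio {η Ψ A C γ z : ℝ} (hη : 0 < η) (hΨ : 0 < Ψ) (hz : 0 < z)
    (hden : 0 < η * A * z + C) :
    {y | η * Ψ * y * z / (η * A * z + C) < γ} = Set.Iio (γ * A / Ψ + γ * C / (η * Ψ) / z) := by
  have ht : γ * A / Ψ + γ * C / (η * Ψ) / z = γ * (η * A * z + C) / (η * Ψ * z) := by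
    field_simp
  ext y
  rw [Set.mem_ofPred_eq, Set.mem_Iio, ht, lt_div_iff₀ (by positivity), div_lt_iff₀ hden]
  ring_nf

/-- The computation of `Θ` in Appendix D (eq. (39), before the Bessel evaluation): for
constants `A, C > 0`, with `X` the maximum of `M` i.i.d. exponential(λ_SR) gains and `Z`
exponential(λ_RE) independent of `X`,
`P(ηΨXZ/(ηAZ + C) < γ_th) = 1 + Σ_b (-1)^b C(M,b) e^{-bλ_SRγ_thA/Ψ} λ_RE ∫₀^∞
  e^{-bλ_SRγ_thC/(ηΨz) - λ_REz} dz`. -/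
theorem statement_12 {Ω : Type*} [MeasurableSpace Ω] (P : Measure Ω) [IsProbabilityMeasure P]
    (M : ℕ) (hM : 1 ≤ M) (lamSR lamRE η Ψ γth A C : ℝ)
    (hSR : 0 < lamSR) (hRE : 0 < lamRE) (hη : 0 < η) (hΨ : 0 < Ψ) (hγ : 0 < γth)
    (hA : 0 < A) (hC : 0 < C)
    (X : Fin M → Ω → ℝ) (Z : Ω → ℝ)
    (hmeasX : ∀ m, Measurable (X m)) (hmeasZ : Measurable Z)
    (hindep : iIndepFun (Sum.elim X fun _ : Unit => Z) P)
    (hlawX : ∀ m, P.map (X m) = expMeasure lamSR)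
    (hlawZ : P.map Z = expMeasure lamRE) :
    (P {ω | η * Ψ * (⨆ m, X m ω) * Z ω / (η * A * Z ω + C) < γth}).toReal =
      1 + ∑ b ∈ Finset.Icc 1 M, (-1 : ℝ) ^ b * (M.choose b : ℝ) *
        Real.exp (-(b : ℝ) * lamSR * γth * A / Ψ) *
        (lamRE * ∫ z in Set.Ioi (0 : ℝ),
          Real.exp (-(b : ℝ) * lamSR * γth * C / (η * Ψ * z) - lamRE * z)) := by
  have : Nonempty (Fin M) := ⟨⟨0, hM⟩⟩
  set p := lamSR * γth * A / Ψ with hp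
  set q := lamSR * γth * C / (η * Ψ) with hq
  set S := {x : ℝ × ℝ | η * Ψ * x.1 * x.2 / (η * A * x.2 + C) < γth}
  have hS : MeasurableSet S := measurableSet_lt (by fun_prop) measurable_const
  have hY : Measurable fun ω => ⨆ m, X m ω := Measurable.iSup hmeasX
  have hindepX : iIndepFun X P := hindep.precomp (g := Sum.inl) Sum.inl_injective
  have hcdf : ∀ᵐ z ∂expMeasure lamRE,
      P.map (fun ω => ⨆ m, X m ω) {y | η * Ψ * y * z / (η * A * z + C) < γth} =
        ENNReal.ofReal ((1 - exp (-(p + q / z))) ^ M) := by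
    filter_upwards [ae_pos_expMeasure hRE] with z hz
    rw [setOf_div_lt_eq_Iio hη hΨ hz (by positivity), Measure.map_apply hY measurableSet_Iio,
      hindepX.measure_iSup_lt_of_map_eq_expMeasure
        hmeasX hlawX hSR (by positivity), Fintype.card_fin]
    congr 4
    ring
  have hnonneg : ∀ᵐ z ∂expMeasure lamRE, 0 ≤ (1 - exp (-(p + q / z))) ^ M := by
    filter_upwards [ae_pos_expMeasure hRE] with z hz
    exact pow_nonneg (sub_nonneg.2 (exp_le_one_iff.2 (neg_nonpos.2 (by positivity)))) _
  calc (P {ω | η * Ψ * (⨆ m, X m ω) * Z ω / (η * A * Z ω + C) < γth}).toReal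
      = (P ((fun ω => (⨆ m, X m ω, Z ω)) ⁻¹' S)).toReal := rfl
    _ = (∫⁻ z, ENNReal.ofReal ((1 - exp (-(p + q / z))) ^ M) ∂expMeasure lamRE).toReal := by
        rw [(hindep.indepFun_iSup_sumElim hmeasX hmeasZ).measure_preimage_eq_lintegral hY hmeasZ hS,
          hlawZ]
        exact congrArg ENNReal.toReal (lintegral_congr_ae hcdf)
    _ = ∫ z in Set.Ioi 0, lamRE * exp (-(lamRE * z)) * (1 - exp (-(p + q / z))) ^ M := by
        rw [← integral_expMeasure hRE, integral_eq_lintegral_of_nonneg_ae hnonneg (by fun_prop)]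
    _ = _ := by
        rw [integral_exp_mul_one_sub_exp_pow hRE (by positivity)]
        refine congrArg (1 + ·) (sum_congr rfl fun b _ => ?_)
        simp_rw [hp, hq]
        ring_nf
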